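/- Divergence of the relative noise term (intermediate step in the proof of Corollary 1): in the asymptotic setting with z_t = 0 and z_r > 1/2, for every UE index k the sequence E_k(M)/(κ_r(M) κ_{t0} A_k(M)) tends to +∞ as M → ∞. -/

import Mathlib

open Finset Filter Topology

noncomputable section

/-- Fixed system parameters of the cell-free massive MIMO uplink:
`K` UEs, pilot length `τ`, pilot power `ρp`, noise power `σ2`,
power-control coefficients `γ`, pilot correlations `δ` (δ k k' = |φ_k^H φ_{k'}|²),
and large-scale fading coefficients `β m k` (AP index `m ∈ ℕ`, UE index `k`). -/
structure Params where
  K : ℕ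
  τ : ℕ
  ρp : ℝ
  σ2 : ℝ
  γ : Fin K → ℝ
  δ : Fin K → Fin K → ℝ
  β : ℕ → Fin K → ℝ

namespace Params

variable (P : Params)

/-- LMMSE coefficient `c_{mk}` for hardware quality factors `κt, κr`. -/
def c (κt κr : ℝ) (m : ℕ) (k : Fin P.K) : ℝ :=
  Real.sqrt ((P.τ : ℝ) * P.ρp * κr * κt) * P.β m k /
    (P.ρp * ∑ k' : Fin P.K, P.β m k' *
      (κr * κt * (P.τ : ℝ) * P.δ k k' + (1 - κr * κt)) + P.σ2)

/-- Mean-square of the LMMSE channel estimate `λ_{mk}`. -/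
def lam (κt κr : ℝ) (m : ℕ) (k : Fin P.K) : ℝ :=
  Real.sqrt ((P.τ : ℝ) * P.ρp * κr * κt) * P.β m k * P.c κt κr m k

/-- Desired-signal term `A_k` (using APs `0, …, M-1`). -/
def A (κt κr : ℝ) (M : ℕ) (k : Fin P.K) : ℝ :=
  P.γ k * (∑ m ∈ Finset.range M, P.lam κt κr m k) ^ 2

/-- Non-coherent interference term `B_k`. -/
def B (κt κr : ℝ) (M : ℕ) (k : Fin P.K) : ℝ :=
  ∑ k' : Fin P.K, P.γ k' *
    ((∑ m ∈ Finset.range M, P.lam κt κr m k * P.β m k') +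
      P.ρp * (1 - κr) * ∑ m ∈ Finset.range M, (P.c κt κr m k) ^ 2 * (P.β m k') ^ 2)

/-- Coherent interference term `C_k`. -/
def C (κt κr : ℝ) (M : ℕ) (k : Fin P.K) : ℝ :=
  ∑ k' : Fin P.K, P.γ k' * (P.δ k k' + (1 - κt) / (κt * (P.τ : ℝ))) *
    (∑ m ∈ Finset.range M, P.lam κt κr m k * (P.β m k' / P.β m k)) ^ 2

/-- AP receiver-distortion term `D_k`. -/
def D (κt κr : ℝ) (M : ℕ) (k : Fin P.K) : ℝ :=
  ∑ m ∈ Finset.range M, ∑ k' : Fin P.K, P.γ k' *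
    (P.lam κt κr m k * P.β m k' +
      (P.c κt κr m k) ^ 2 * (1 - κr) * P.ρp * (P.β m k') ^ 2 +
      (P.c κt κr m k) ^ 2 * κr * P.ρp * P.β m k' *
        ((P.τ : ℝ) * κt * P.δ k k' + (1 - κt)))

/-- Noise term `E_k` for uplink power `ρu`. -/
def E (κt κr ρu : ℝ) (M : ℕ) (k : Fin P.K) : ℝ :=
  (P.σ2 / ρu) * ∑ m ∈ Finset.range M, P.lam κt κr m k

/-- Effective SINR of UE `k` (Theorem 1). -/
def SINR (κt κr ρu : ℝ) (M : ℕ) (k : Fin P.K) : ℝ :=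
  κr * κt * P.A κt κr M k /
    (κr * P.B κt κr M k + κr * P.C κt κr M k - κr * κt * P.A κt κr M k +
      (1 - κr) * P.D κt κr M k + P.E κt κr ρu M k)

/-- Spectral efficiency of UE `k` (Theorem 1): `R_k = log₂(1 + SINR_k)`. -/
def R (κt κr ρu : ℝ) (M : ℕ) (k : Fin P.K) : ℝ :=
  Real.logb 2 (1 + P.SINR κt κr ρu M k)

/-- Standing assumptions on the fixed parameters: `K ≥ 1`, `τ ≥ 1`, `ρp, σ² > 0`,
`γ_k ∈ (0,1]`, `δ_{kk'} ∈ [0,1]`, `δ_{kk} = 1`. -/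
def Valid : Prop :=
  1 ≤ P.K ∧ 1 ≤ P.τ ∧ 0 < P.ρp ∧ 0 < P.σ2 ∧
  (∀ k, 0 < P.γ k ∧ P.γ k ≤ 1) ∧
  (∀ k k', 0 ≤ P.δ k k' ∧ P.δ k k' ≤ 1) ∧
  (∀ k, P.δ k k = 1)

end Params

/-!
Writing `S = ∑_{m<M} λ_{mk}`, we have `E_k = (σ²/ρ_u) S` and `A_k = γ_k S²`, so the ratio is
`σ² / (ρ_u κ_{t0} γ_k) · (κ_r S)⁻¹`. Every denominator of `c_{mk}` is at least `σ²`, hence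
`λ_{mk} ≤ τ ρ_p κ_r κ_t β_max² / σ²` and `0 < κ_r S ≤ C κ_r² M = C κ_{r0}² M^(1 - 2 z_r)`,
which tends to `0` because `z_r > 1/2`.
-/

theorem tendsto_sq_div_rpow_mul_self_atTop {z : ℝ} (hz : 1 / 2 < z) (a : ℝ) :
    Tendsto (fun x : ℝ => (a / x ^ z) ^ 2 * x) atTop (𝓝 0) := by
  have hpow : Tendsto (fun x : ℝ => a ^ 2 * x ^ (-(2 * z - 1))) atTop (𝓝 0) := by
    simpa using (tendsto_rpow_neg_atTop (by linarith : 0 < 2 * z - 1)).const_mul (a ^ 2)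
  refine hpow.congr' ?_
  filter_upwards [eventually_gt_atTop 0] with x hx
  rw [Real.rpow_neg hx.le, Real.rpow_sub hx, Real.rpow_one, mul_comm 2 z,
    Real.rpow_mul hx.le, Real.rpow_two]
  field_simp

namespace Params

variable (P : Params) {κt κr : ℝ}

def pilotDenom (κt κr : ℝ) (m : ℕ) (k : Fin P.K) : ℝ :=
  P.ρp * ∑ k' : Fin P.K, P.β m k' * (κr * κt * (P.τ : ℝ) * P.δ k k' + (1 - κr * κt)) + P.σ2

theorem lam_eq (hq : 0 ≤ (P.τ : ℝ) * P.ρp * κr * κt) (m : ℕ) (k : Fin P.K) :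
    P.lam κt κr m k = (P.τ : ℝ) * P.ρp * κr * κt * P.β m k ^ 2 / P.pilotDenom κt κr m k := by
  rw [lam, c, ← pilotDenom]
  linear_combination (P.β m k ^ 2 / P.pilotDenom κt κr m k) * Real.mul_self_sqrt hq

theorem sigma2_le_pilotDenom (hρp : 0 ≤ P.ρp) (hκ₀ : 0 ≤ κr * κt) (hκ₁ : κr * κt ≤ 1)
    {m : ℕ} (hβ : ∀ k', 0 ≤ P.β m k') {k : Fin P.K} (hδ : ∀ k', 0 ≤ P.δ k k') :
    P.σ2 ≤ P.pilotDenom κt κr m k := by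
  have hsum : 0 ≤ ∑ k' : Fin P.K, P.β m k' *
      (κr * κt * (P.τ : ℝ) * P.δ k k' + (1 - κr * κt)) :=
    Finset.sum_nonneg fun k' _ => mul_nonneg (hβ k') <|
      add_nonneg (mul_nonneg (mul_nonneg hκ₀ P.τ.cast_nonneg) (hδ k')) (sub_nonneg.2 hκ₁)
  exact le_add_of_nonneg_left (mul_nonneg hρp hsum)

theorem sum_lam_pos (hq : 0 < (P.τ : ℝ) * P.ρp * κr * κt) {k : Fin P.K}
    (hβ : ∀ m, 0 < P.β m k) (hden : ∀ m, 0 < P.pilotDenom κt κr m k) {M : ℕ} (hM : M ≠ 0) :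
    0 < ∑ m ∈ range M, P.lam κt κr m k := by
  refine Finset.sum_pos (fun m _ => ?_) (nonempty_range_iff.2 hM)
  rw [P.lam_eq hq.le]
  exact div_pos (mul_pos hq (pow_pos (hβ m) 2)) (hden m)

theorem sum_lam_le (hq : 0 ≤ (P.τ : ℝ) * P.ρp * κr * κt) (hσ2 : 0 < P.σ2) {k : Fin P.K}
    (hden : ∀ m, P.σ2 ≤ P.pilotDenom κt κr m k) {βmax : ℝ}
    (hβ : ∀ m, 0 ≤ P.β m k ∧ P.β m k ≤ βmax) (M : ℕ) :
    ∑ m ∈ range M, P.lam κt κr m k ≤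
      M * ((P.τ : ℝ) * P.ρp * κr * κt * βmax ^ 2 / P.σ2) := by
  calc ∑ m ∈ range M, P.lam κt κr m k
      ≤ ∑ _m ∈ range M, (P.τ : ℝ) * P.ρp * κr * κt * βmax ^ 2 / P.σ2 := by
        refine sum_le_sum fun m _ => ?_
        rw [P.lam_eq hq]
        gcongr
        exacts [(hβ m).1, (hβ m).2, hden m]
    _ = _ := by rw [sum_const, card_range, nsmul_eq_mul]

theorem E_div_A_eq (ρu : ℝ) (M : ℕ) (k : Fin P.K) :
    P.E κt κr ρu M k / (κr * κt * P.A κt κr M k) =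
      P.σ2 / (ρu * κt * P.γ k) * (κr * ∑ m ∈ range M, P.lam κt κr m k)⁻¹ := by
  rw [E, A, mul_inv, ← div_self_mul_self' (∑ m ∈ range M, P.lam κt κr m k)]
  ring

theorem mul_sum_lam_pos_and_le (hτ : 1 ≤ P.τ) (hρp : 0 < P.ρp) (hσ2 : 0 < P.σ2) {k : Fin P.K}
    (hδ : ∀ k', 0 ≤ P.δ k k') (hβ : ∀ m k', 0 < P.β m k') {βmax : ℝ}
    (hβmax : ∀ m, P.β m k ≤ βmax) (hκt : 0 < κt) (hκr : 0 < κr)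
    (hκ : κr * κt ≤ 1) {M : ℕ} (hM : M ≠ 0) :
    0 < κr * ∑ m ∈ range M, P.lam κt κr m k ∧
      κr * ∑ m ∈ range M, P.lam κt κr m k ≤
        (P.τ : ℝ) * P.ρp * κt * βmax ^ 2 / P.σ2 * (κr ^ 2 * M) := by
  have hq : 0 < (P.τ : ℝ) * P.ρp * κr * κt := by
    have : (0 : ℝ) < P.τ := by exact_mod_cast hτ
    positivity
  have hden : ∀ m, P.σ2 ≤ P.pilotDenom κt κr m k := fun m =>
    P.sigma2_le_pilotDenom hρp.le (by positivity) hκ (fun k' => (hβ m k').le) hδ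
  refine ⟨mul_pos hκr (P.sum_lam_pos hq (fun m => hβ m k) (fun m => hσ2.trans_le (hden m)) hM),
    ?_⟩
  calc κr * ∑ m ∈ range M, P.lam κt κr m k
      ≤ κr * (M * ((P.τ : ℝ) * P.ρp * κr * κt * βmax ^ 2 / P.σ2)) :=
        mul_le_mul_of_nonneg_left
          (P.sum_lam_le hq.le hσ2 hden (fun m => ⟨(hβ m k).le, hβmax m⟩) M) hκr.le
    _ = _ := by ring

theorem tendsto_mul_sum_lam_nhdsGT_zero (hτ : 1 ≤ P.τ) (hρp : 0 < P.ρp) (hσ2 : 0 < P.σ2)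
    {k : Fin P.K} (hδ : ∀ k', 0 ≤ P.δ k k') (hβ : ∀ m k', 0 < P.β m k') {βmax : ℝ}
    (hβmax : ∀ m, P.β m k ≤ βmax) {κt0 κr0 : ℝ} (hκt0 : 0 < κt0 ∧ κt0 ≤ 1)
    (hκr0 : 0 < κr0 ∧ κr0 ≤ 1) {zr : ℝ} (hzr : 1 / 2 < zr) :
    Tendsto (fun M : ℕ => κr0 / (M : ℝ) ^ zr *
        ∑ m ∈ range M, P.lam κt0 (κr0 / (M : ℝ) ^ zr) m k) atTop (𝓝[>] 0) := by
  have hbounds : ∀ᶠ M : ℕ in atTop,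
      0 < κr0 / (M : ℝ) ^ zr * ∑ m ∈ range M, P.lam κt0 (κr0 / (M : ℝ) ^ zr) m k ∧
        κr0 / (M : ℝ) ^ zr * ∑ m ∈ range M, P.lam κt0 (κr0 / (M : ℝ) ^ zr) m k ≤
          (P.τ : ℝ) * P.ρp * κt0 * βmax ^ 2 / P.σ2 * ((κr0 / (M : ℝ) ^ zr) ^ 2 * M) := by
    filter_upwards [eventually_ge_atTop 1] with M hM
    have hMz : 1 ≤ (M : ℝ) ^ zr := Real.one_le_rpow (by exact_mod_cast hM) (by linarith)
    have hκ : κr0 / (M : ℝ) ^ zr ≤ 1 := (div_le_self hκr0.1.le hMz).trans hκr0.2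
    exact P.mul_sum_lam_pos_and_le hτ hρp hσ2 hδ hβ hβmax hκt0.1
      (div_pos hκr0.1 (by positivity)) (mul_le_one₀ hκ hκt0.1.le hκt0.2) (by omega)
  have hupper := ((tendsto_sq_div_rpow_mul_self_atTop hzr κr0).comp
    tendsto_natCast_atTop_atTop).const_mul ((P.τ : ℝ) * P.ρp * κt0 * βmax ^ 2 / P.σ2)
  rw [mul_zero] at hupper
  refine tendsto_nhdsWithin_of_tendsto_nhds_of_eventually_within _ ?_
    (hbounds.mono fun _ h => h.1)
  exact tendsto_of_tendsto_of_tendsto_of_le_of_le' tendsto_const_nhds hupper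
    (hbounds.mono fun _ h => h.1.le) (hbounds.mono fun _ h => h.2)

end Params

/-- Intermediate step of Corollary 1: with `z_t = 0` and `z_r > 1/2`, the
relative noise term diverges: `E_k/(κ_r κ_{t0} A_k) → +∞` as `M → ∞`. -/
theorem hardware_scaling_law_noise_term_diverges
    (P : Params) (hP : P.Valid) (ρu : ℝ) (hρu : 0 < ρu)
    (βmin βmax : ℝ) (hβmin : 0 < βmin)
    (hβ : ∀ m : ℕ, ∀ k : Fin P.K, βmin ≤ P.β m k ∧ P.β m k ≤ βmax)
    (κt0 κr0 : ℝ) (hκt0 : 0 < κt0 ∧ κt0 ≤ 1) (hκr0 : 0 < κr0 ∧ κr0 ≤ 1)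
    (zr : ℝ) (hzr : 1 / 2 < zr) (k : Fin P.K) :
    Filter.Tendsto
      (fun M : ℕ =>
        P.E κt0 (κr0 / (M : ℝ) ^ zr) ρu M k /
          (κr0 / (M : ℝ) ^ zr * κt0 * P.A κt0 (κr0 / (M : ℝ) ^ zr) M k))
      Filter.atTop Filter.atTop := by
  obtain ⟨-, hτ, hρp, hσ2, hγ, hδ, -⟩ := hP
  simp only [P.E_div_A_eq]
  have hβpos : ∀ m k', 0 < P.β m k' := fun m k' => hβmin.trans_le (hβ m k').1
  exact (P.tendsto_mul_sum_lam_nhdsGT_zero hτ hρp hσ2 (fun k' => (hδ k k').1) hβpos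
    (fun m => (hβ m k).2) hκt0 hκr0 hzr).inv_tendsto_nhdsGT_zero.const_mul_atTop
      (div_pos hσ2 (mul_pos (mul_pos hρu hκt0.1) (hγ k).1))
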